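/- The left A-module P = K[[t]] is injective and indecomposable; moreover, the A-submodule of P generated by the constant power series 1 equals the subspace K[t] of polynomials, is a simple left A-module isomorphic to the left ideal Aw, and is essential in P (every nonzero A-submodule of P meets it nontrivially). Hence P is an injective envelope of the simple module Aw; it realizes the module K[[Y]](1 − YX). -/

import Mathlib

/-!
An `A`-linear map `g : N → K⟦t⟧` is determined by the functional `coeff₀ ∘ g`, which vanishes on
`Y N`; conversely every functional `β` on `N` vanishing on `Y N` comes from `n ↦ Σ β(Xʲ n) tʲ`.
So by Baer's criterion injectivity amounts to extending, for a left ideal `I`, the functional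
`coeff₀ ∘ g` from `I` to `A` so that it vanishes on `Y A`. This is possible because
`I ∩ Y A ⊆ Y I`: if `a = Y b` then `w a = w Y b = 0`, so `a = Y (X a)`.

Since `w Xⁿ` sends `f` to `fₙ · 1`, every nonzero submodule of `K⟦t⟧` contains `1`; this gives
simplicity of `A · 1 = K[t]`, essentiality and indecomposability. Finally `q ↦ q(Y) w` maps `K[t]`
onto `A w`, and `u ↦ u • 1` inverts it.
-/

noncomputable section

/-- The relation `X * Y = 1` defining the Jacobson algebra. -/
def JacRel (K : Type) [Field K] : FreeAlgebra K (Fin 2) → FreeAlgebra K (Fin 2) → Prop :=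
  fun a b => a = FreeAlgebra.ι K (0 : Fin 2) * FreeAlgebra.ι K (1 : Fin 2) ∧ b = 1

/-- The Jacobson algebra `K⟨X, Y ∣ XY = 1⟩`. -/
abbrev Jac (K : Type) [Field K] := RingQuot (JacRel K)

variable (K : Type) [Field K]

/-- The generator `X`. -/
def Xg : Jac K := RingQuot.mkAlgHom K (JacRel K) (FreeAlgebra.ι K 0)
/-- The generator `Y`. -/
def Yg : Jac K := RingQuot.mkAlgHom K (JacRel K) (FreeAlgebra.ι K 1)

/-- `w = 1 - YX`. -/
def wE : Jac K := 1 - Yg K * Xg K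
/-- `c = Y²X`. -/
def cE : Jac K := Yg K ^ 2 * Xg K

/-- A module is indecomposable if it is nonzero and is not the internal direct sum of two
nonzero submodules. -/
def IsIndecomposableModule (S : Type) [Ring S] (E : Type) [AddCommGroup E] [Module S E] :
    Prop :=
  (∃ x : E, x ≠ 0) ∧ ¬∃ N₁ N₂ : Submodule S E, N₁ ≠ ⊥ ∧ N₂ ≠ ⊥ ∧ IsCompl N₁ N₂

/-- Multiplication by `t` on `K[[t]]`. -/
def psMulX : PowerSeries K →ₗ[K] PowerSeries K := LinearMap.mulLeft K PowerSeries.X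

/-- The backward shift `Σ kᵢtⁱ ↦ Σ kᵢ₊₁tⁱ` on `K[[t]]`. -/
def psShift : PowerSeries K →ₗ[K] PowerSeries K where
  toFun f := PowerSeries.mk fun n => PowerSeries.coeff (R := K) (n + 1) f
  map_add' a b := by
    ext n
    simp
  map_smul' m a := by
    ext n
    simp

theorem psShift_comp_psMulX : psShift K ∘ₗ psMulX K = LinearMap.id := by
  refine LinearMap.ext fun f => ?_
  ext n
  simp [psShift, psMulX, PowerSeries.coeff_succ_X_mul]

/-- The representation of the Jacobson algebra on `K[[t]]`, with `Y` acting as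
multiplication by `t` and `X` as the backward shift. -/
def psRep : Jac K →ₐ[K] Module.End K (PowerSeries K) :=
  RingQuot.liftAlgHom K
    ⟨FreeAlgebra.lift K (fun i : Fin 2 => if i = 0 then psShift K else psMulX K), by
      rintro a b ⟨ha, hb⟩
      subst ha; subst hb
      rw [map_mul, map_one, FreeAlgebra.lift_ι_apply, FreeAlgebra.lift_ι_apply,
        if_pos rfl, if_neg (by decide)]
      exact psShift_comp_psMulX K⟩

/-- The left `A`-module structure on `P = K[[t]]`. -/
instance : Module (Jac K) (PowerSeries K) := Module.compHom _ (psRep K).toRingHom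

open scoped Polynomial PowerSeries

section

variable {K}

theorem Jac.induction_on {p : Jac K → Prop} (a : Jac K) (algebraMap : ∀ c, p (algebraMap K _ c))
    (Xg : p (Xg K)) (Yg : p (Yg K)) (add : ∀ a b, p a → p b → p (a + b))
    (mul : ∀ a b, p a → p b → p (a * b)) : p a := by
  obtain ⟨x, rfl⟩ := RingQuot.mkAlgHom_surjective K (JacRel K) a
  induction x using FreeAlgebra.induction with
  | grade0 c => rw [AlgHom.commutes]; exact algebraMap c
  | grade1 i => fin_cases i; exacts [Xg, Yg]
  | mul a b ha hb => rw [map_mul]; exact mul _ _ ha hb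
  | add a b ha hb => rw [map_add]; exact add _ _ ha hb

theorem Xg_mul_Yg : Xg K * Yg K = 1 := by
  have h := RingQuot.mkAlgHom_rel K (s := JacRel K) ⟨rfl, rfl⟩
  rwa [map_mul, map_one] at h

theorem Xg_mul_wE : Xg K * wE K = 0 := by
  rw [wE, mul_sub, mul_one, ← mul_assoc, Xg_mul_Yg, one_mul, sub_self]

theorem wE_mul_Yg : wE K * Yg K = 0 := by
  rw [wE, sub_mul, one_mul, mul_assoc, Xg_mul_Yg, mul_one, sub_self]

theorem Yg_smul_Xg_smul_of_wE_smul {M : Type*} [AddCommGroup M] [Module (Jac K) M] {m : M}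
    (hm : wE K • m = 0) : Yg K • Xg K • m = m := by
  rwa [wE, sub_smul, one_smul, mul_smul, sub_eq_zero, eq_comm] at hm

section ScalarTower

variable {M N : Type*} [AddCommGroup M] [Module K M] [Module (Jac K) M] [IsScalarTower K (Jac K) M]
  [AddCommGroup N] [Module K N] [Module (Jac K) N] [IsScalarTower K (Jac K) N]

theorem Jac.smul_mem_of_Xg_Yg {S : Submodule K M} (hX : ∀ m ∈ S, Xg K • m ∈ S)
    (hY : ∀ m ∈ S, Yg K • m ∈ S) (a : Jac K) {m : M} (hm : m ∈ S) : a • m ∈ S := by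
  induction a using Jac.induction_on generalizing m with
  | algebraMap c => rw [algebraMap_smul]; exact S.smul_mem c hm
  | Xg => exact hX m hm
  | Yg => exact hY m hm
  | add a b ha hb => rw [add_smul]; exact S.add_mem (ha hm) (hb hm)
  | mul a b ha hb => rw [mul_smul]; exact ha (hb hm)

theorem Jac.span_singleton_le_of_Xg_Yg {S : Submodule K M} (hX : ∀ m ∈ S, Xg K • m ∈ S)
    (hY : ∀ m ∈ S, Yg K • m ∈ S) {m : M} (hm : m ∈ S) :
    (Submodule.span (Jac K) {m}).restrictScalars K ≤ S := by
  intro x hx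
  obtain ⟨a, rfl⟩ := Submodule.mem_span_singleton.mp hx
  exact Jac.smul_mem_of_Xg_Yg hX hY a hm

theorem Jac.map_smul_of_Xg_Yg (φ : N →ₗ[K] M) (hX : ∀ n, φ (Xg K • n) = Xg K • φ n)
    (hY : ∀ n, φ (Yg K • n) = Yg K • φ n) (a : Jac K) (n : N) : φ (a • n) = a • φ n := by
  induction a using Jac.induction_on generalizing n with
  | algebraMap c => simp only [algebraMap_smul, map_smul]
  | Xg => exact hX n
  | Yg => exact hY n
  | add a b ha hb => rw [add_smul, add_smul, map_add, ha, hb]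
  | mul a b ha hb => rw [mul_smul, mul_smul, ha, hb]

end ScalarTower


theorem Jac.smul_powerSeries_def (a : Jac K) (f : K⟦X⟧) : a • f = psRep K a f := rfl

instance : IsScalarTower K (Jac K) K⟦X⟧ where
  smul_assoc c a f := by
    rw [Jac.smul_powerSeries_def, Jac.smul_powerSeries_def, map_smul]
    rfl

theorem Xg_smul (f : K⟦X⟧) : Xg K • f = psShift K f := by
  rw [Jac.smul_powerSeries_def, Xg, psRep, RingQuot.liftAlgHom_mkAlgHom_apply]
  simp [FreeAlgebra.lift_ι_apply]

theorem Yg_smul (f : K⟦X⟧) : Yg K • f = PowerSeries.X * f := by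
  rw [Jac.smul_powerSeries_def, Yg, psRep, RingQuot.liftAlgHom_mkAlgHom_apply]
  simp [FreeAlgebra.lift_ι_apply, psMulX]

theorem coeff_Xg_smul (n : ℕ) (f : K⟦X⟧) :
    PowerSeries.coeff n (Xg K • f) = PowerSeries.coeff (n + 1) f := by
  simp [Xg_smul, psShift]

theorem coeff_Xg_pow_smul (n k : ℕ) (f : K⟦X⟧) :
    PowerSeries.coeff k (Xg K ^ n • f) = PowerSeries.coeff (k + n) f := by
  induction n generalizing k with
  | zero => simp
  | succ n ih => rw [pow_succ', mul_smul, coeff_Xg_smul, ih, add_right_comm, add_assoc]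

theorem coeff_zero_Yg_smul (f : K⟦X⟧) : PowerSeries.coeff 0 (Yg K • f) = 0 := by
  simp [Yg_smul]

theorem coeff_succ_Yg_smul (n : ℕ) (f : K⟦X⟧) :
    PowerSeries.coeff (n + 1) (Yg K • f) = PowerSeries.coeff n f := by
  rw [Yg_smul, PowerSeries.coeff_succ_X_mul]

theorem wE_smul (f : K⟦X⟧) : wE K • f = PowerSeries.coeff 0 f • (1 : K⟦X⟧) := by
  ext (_ | n)
  · rw [wE, sub_smul, one_smul, mul_smul, map_sub, coeff_zero_Yg_smul]
    simp
  · simp [wE, sub_smul, mul_smul, coeff_succ_Yg_smul, coeff_Xg_smul, PowerSeries.coeff_one]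

theorem wE_smul_one : wE K • (1 : K⟦X⟧) = 1 := by
  simp [wE_smul]

theorem aeval_Yg_smul (q : K[X]) (f : K⟦X⟧) : Polynomial.aeval (Yg K) q • f = q * f := by
  induction q using Polynomial.induction_on' with
  | add p q hp hq => rw [map_add, add_smul, hp, hq, Polynomial.coe_add, add_mul]
  | monomial n c =>
    have hY : ∀ g : K⟦X⟧, Yg K ^ n • g = PowerSeries.X ^ n * g := fun g => by
      induction n generalizing g with
      | zero => simp
      | succ n ih => rw [pow_succ', mul_smul, ih, Yg_smul, pow_succ', mul_assoc]
    rw [Polynomial.aeval_monomial, mul_smul, algebraMap_smul, hY,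
      ← Polynomial.C_mul_X_pow_eq_monomial, Polynomial.coe_mul, Polynomial.coe_C,
      Polynomial.coe_pow, Polynomial.coe_X, PowerSeries.smul_eq_C_mul, mul_assoc]

theorem psShift_coe (q : K[X]) : psShift K (q : K⟦X⟧) = q.divX := by
  ext n
  simp [psShift, Polynomial.coeff_coe, Polynomial.coeff_divX]


theorem one_mem_of_ne_bot {N : Submodule (Jac K) K⟦X⟧} (hN : N ≠ ⊥) : (1 : K⟦X⟧) ∈ N := by
  obtain ⟨f, hfN, hf⟩ := Submodule.exists_mem_ne_zero_of_ne_bot hN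
  obtain ⟨n, hn⟩ : ∃ n, PowerSeries.coeff n f ≠ 0 := by
    by_contra! h
    exact hf (PowerSeries.ext h)
  have key : (algebraMap K (Jac K) (PowerSeries.coeff n f)⁻¹ * wE K * Xg K ^ n) • f = 1 := by
    rw [mul_smul, mul_smul, wE_smul, coeff_Xg_pow_smul, zero_add, algebraMap_smul, smul_smul,
      inv_mul_cancel₀ hn, one_smul]
  exact key ▸ N.smul_mem _ hfN

theorem span_one_le_of_ne_bot {N : Submodule (Jac K) K⟦X⟧} (hN : N ≠ ⊥) :
    Submodule.span (Jac K) {(1 : K⟦X⟧)} ≤ N :=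
  (Submodule.span_singleton_le_iff_mem _ _).mpr (one_mem_of_ne_bot hN)

theorem isAtom_span_one : IsAtom (Submodule.span (Jac K) {(1 : K⟦X⟧)}) :=
  ⟨by simp, fun N hN => by_contra fun h => hN.not_ge (span_one_le_of_ne_bot h)⟩

theorem span_one_eq_range_coe :
    (Submodule.span (Jac K) {(1 : K⟦X⟧)} : Set K⟦X⟧) = Set.range ((↑) : K[X] → K⟦X⟧) := by
  set S := LinearMap.range (Polynomial.coeToPowerSeries.algHom (R := K) K).toLinearMap
  have hS : ∀ f, f ∈ S ↔ f ∈ Set.range ((↑) : K[X] → K⟦X⟧) := fun f => by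
    simp [S, Polynomial.coeToPowerSeries.algHom_apply]
  apply subset_antisymm
  · refine fun f hf => (hS f).mp (Jac.span_singleton_le_of_Xg_Yg ?_ ?_ ((hS 1).mpr ⟨1, ?_⟩) hf)
    · rintro _ hf
      obtain ⟨q, rfl⟩ := (hS _).mp hf
      exact (hS _).mpr ⟨q.divX, by rw [Xg_smul, psShift_coe]⟩
    · rintro _ hf
      obtain ⟨q, rfl⟩ := (hS _).mp hf
      exact (hS _).mpr ⟨Polynomial.X * q, by rw [Yg_smul, Polynomial.coe_mul, Polynomial.coe_X]⟩
    · exact Polynomial.coe_one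
  · rintro _ ⟨q, rfl⟩
    rw [← mul_one (q : K⟦X⟧), ← aeval_Yg_smul]
    exact Submodule.smul_mem _ _ (Submodule.mem_span_singleton_self 1)


def aevalYgMulWE : K[X] →ₗ[K] Jac K :=
  LinearMap.mulRight K (wE K) ∘ₗ (Polynomial.aeval (Yg K)).toLinearMap

theorem aevalYgMulWE_apply (q : K[X]) : aevalYgMulWE q = Polynomial.aeval (Yg K) q * wE K := rfl

theorem aevalYgMulWE_smul_one (q : K[X]) : aevalYgMulWE q • (1 : K⟦X⟧) = q := by
  rw [aevalYgMulWE_apply, mul_smul, wE_smul_one, aeval_Yg_smul, mul_one]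

theorem Yg_mul_aevalYgMulWE (q : K[X]) :
    Yg K * aevalYgMulWE q = aevalYgMulWE (Polynomial.X * q) := by
  rw [aevalYgMulWE_apply, aevalYgMulWE_apply, map_mul, Polynomial.aeval_X, mul_assoc]

theorem Xg_mul_aevalYgMulWE (q : K[X]) : Xg K * aevalYgMulWE q = aevalYgMulWE q.divX := by
  conv_lhs => rw [aevalYgMulWE_apply, ← Polynomial.X_mul_divX_add q]
  rw [map_add, map_mul, Polynomial.aeval_X, Polynomial.aeval_C, add_mul, mul_add, ← mul_assoc,
    ← mul_assoc, Xg_mul_Yg, one_mul, ← mul_assoc (Xg K), ← Algebra.commutes, mul_assoc, Xg_mul_wE,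
    mul_zero, add_zero, aevalYgMulWE_apply]

theorem span_wE_le_range_aevalYgMulWE :
    (Submodule.span (Jac K) {wE K}).restrictScalars K ≤ LinearMap.range aevalYgMulWE := by
  refine Jac.span_singleton_le_of_Xg_Yg ?_ ?_ ⟨1, by simp [aevalYgMulWE_apply]⟩
  · rintro _ ⟨q, rfl⟩
    exact ⟨q.divX, (Xg_mul_aevalYgMulWE q).symm⟩
  · rintro _ ⟨q, rfl⟩
    exact ⟨Polynomial.X * q, (Yg_mul_aevalYgMulWE q).symm⟩

def spanWEToPowerSeries : Submodule.span (Jac K) {wE K} →ₗ[Jac K] K⟦X⟧ :=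
  LinearMap.toSpanSingleton (Jac K) K⟦X⟧ 1 ∘ₗ (Submodule.span (Jac K) {wE K}).subtype

theorem spanWEToPowerSeries_injective : Function.Injective (spanWEToPowerSeries (K := K)) := by
  refine (injective_iff_map_eq_zero _).mpr fun u hu => ?_
  obtain ⟨q, hq⟩ := span_wE_le_range_aevalYgMulWE u.2
  have hq0 : (q : K⟦X⟧) = 0 := by
    rw [← aevalYgMulWE_smul_one, hq]
    exact hu
  rw [Polynomial.coe_eq_zero_iff.mp hq0, map_zero] at hq
  exact Subtype.ext hq.symm

theorem range_spanWEToPowerSeries :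
    LinearMap.range (spanWEToPowerSeries (K := K)) = Submodule.span (Jac K) {(1 : K⟦X⟧)} := by
  rw [spanWEToPowerSeries, LinearMap.range_comp, Submodule.range_subtype, Submodule.map_span,
    Set.image_singleton, LinearMap.toSpanSingleton_apply, wE_smul_one]

section Lift

variable {N : Type*} [AddCommGroup N] [Module K N] [Module (Jac K) N] [IsScalarTower K (Jac K) N]

def powerSeriesLift (β : N →ₗ[K] K) (hβ : ∀ n, β (Yg K • n) = 0) : N →ₗ[Jac K] K⟦X⟧ :=
  let φ : N →ₗ[K] K⟦X⟧ :=
    { toFun := fun n => PowerSeries.mk fun j => β (Xg K ^ j • n)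
      map_add' := fun n n' => by ext; simp
      map_smul' := fun c n => by ext; simp [smul_comm _ c] }
  have hX : ∀ n, φ (Xg K • n) = Xg K • φ n := fun n => by
    ext j
    simp [φ, coeff_Xg_smul, pow_succ, mul_smul]
  have hY : ∀ n, φ (Yg K • n) = Yg K • φ n := fun n => by
    ext (_ | j)
    · simp [φ, hβ, coeff_zero_Yg_smul]
    · simp [φ, coeff_succ_Yg_smul, pow_succ, mul_smul, ← mul_smul (Xg K), Xg_mul_Yg]
  { φ with map_smul' := Jac.map_smul_of_Xg_Yg φ hX hY }

theorem coeff_powerSeriesLift (β : N →ₗ[K] K) (hβ : ∀ n, β (Yg K • n) = 0) (j : ℕ) (n : N) :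
    PowerSeries.coeff j (powerSeriesLift β hβ n) = β (Xg K ^ j • n) :=
  PowerSeries.coeff_mk (R := K) j fun j => β (Xg K ^ j • n)

end Lift

theorem baer_powerSeries : Module.Baer (Jac K) K⟦X⟧ := by
  intro I g
  set V := LinearMap.range (LinearMap.mulLeft K (Yg K))
  set γ := PowerSeries.coeff 0 ∘ₗ g.restrictScalars K
  set f := V.mkQ ∘ₗ I.subtype.restrictScalars K
  -- `γ` factors through `f`, i.e. extends to a functional on `A ⧸ Y A`, once it kills `ker f`.
  have hγ : γ ∈ (LinearMap.ker f).dualAnnihilator := by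
    rw [Submodule.mem_dualAnnihilator]
    rintro ⟨a, ha⟩ hf
    obtain ⟨b, hb⟩ := (Submodule.Quotient.mk_eq_zero V).mp hf
    have hw : wE K • (⟨a, ha⟩ : I) = 0 := Subtype.ext <| by
      change Yg K * b = a at hb
      change wE K * a = 0
      rw [← hb, ← mul_assoc, wE_mul_Yg, zero_mul]
    change PowerSeries.coeff 0 (g ⟨a, ha⟩) = 0
    rw [← Yg_smul_Xg_smul_of_wE_smul (M := I) hw, map_smul, coeff_zero_Yg_smul]
  obtain ⟨δ, hδ⟩ := (LinearMap.range_dualMap_eq_dualAnnihilator_ker f).symm ▸ hγ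
  have hβ : ∀ a, (δ ∘ₗ V.mkQ) (Yg K • a) = 0 := fun a => by
    rw [LinearMap.comp_apply, Submodule.mkQ_apply,
      (Submodule.Quotient.mk_eq_zero V (x := Yg K • a)).mpr ⟨a, rfl⟩, map_zero]
  refine ⟨powerSeriesLift (δ ∘ₗ V.mkQ) hβ, fun x hx => ?_⟩
  ext j
  calc PowerSeries.coeff j (powerSeriesLift (δ ∘ₗ V.mkQ) hβ x)
      = γ (Xg K ^ j • ⟨x, hx⟩) := by rw [coeff_powerSeriesLift, ← hδ]; rfl
    _ = PowerSeries.coeff j (g ⟨x, hx⟩) := by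
      rw [LinearMap.comp_apply, LinearMap.restrictScalars_apply, map_smul, coeff_Xg_pow_smul,
        zero_add]

end

/-- `P = K[[t]]` is an indecomposable injective left `A`-module; the `A`-submodule
generated by `1` equals the subspace `K[t]` of polynomials, is a simple module isomorphic
to the left ideal `Aw`, and is essential in `P`.  Hence `P` is an injective envelope of
the simple module `Aw` (it realizes `K[[Y]](1 − YX)`). -/
theorem stmt18 :
    Module.Injective (Jac K) (PowerSeries K) ∧
    IsIndecomposableModule (Jac K) (PowerSeries K) ∧
    (Submodule.span (Jac K) {(1 : PowerSeries K)} : Set (PowerSeries K)) =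
      Set.range (fun q : Polynomial K => (q : PowerSeries K)) ∧
    IsSimpleModule (Jac K) (Submodule.span (Jac K) {(1 : PowerSeries K)}) ∧
    Nonempty ((Submodule.span (Jac K) {(1 : PowerSeries K)}) ≃ₗ[Jac K]
      (Submodule.span (Jac K) {wE K})) ∧
    (∀ N : Submodule (Jac K) (PowerSeries K), N ≠ ⊥ →
      N ⊓ Submodule.span (Jac K) {(1 : PowerSeries K)} ≠ ⊥) := by
  have hatom := isAtom_span_one (K := K)
  refine ⟨baer_powerSeries.injective, ⟨⟨1, one_ne_zero⟩, ?_⟩, span_one_eq_range_coe,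
    isSimpleModule_iff_isAtom.mpr hatom, ⟨?_⟩, fun N hN => ?_⟩
  · rintro ⟨N₁, N₂, hN₁, hN₂, hN⟩
    have h := le_inf (span_one_le_of_ne_bot hN₁) (span_one_le_of_ne_bot hN₂)
    exact hatom.1 (le_bot_iff.mp (hN.inf_eq_bot ▸ h))
  · exact ((LinearEquiv.ofInjective _ spanWEToPowerSeries_injective).trans
      (LinearEquiv.ofEq _ _ range_spanWEToPowerSeries)).symm
  · rw [inf_eq_right.mpr (span_one_le_of_ne_bot hN)]
    exact hatom.1
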